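/- arXiv:2509.04070 — 4 statements merged into one kernel-verified Lean document; each statement's English description precedes it below -/
import Mathlib

section
/- Let α, β be natural numbers, i ≠ j positions, α_swapped the number obtained from α by swapping bits i and j, δ = bit_i(α) - bit_j(α) (as an integer), and Δ = δ · (2^i - 2^j). Then α_swapped · β + Δ · β = α · β. -/
/-- The k-th binary digit of a natural number, as an integer 0 or 1. -/
def bit (k α : ℕ) : ℤ := if α.testBit k then 1 else 0

/-- The number obtained from `α` by exchanging the binary digits at positions `i` and `j`. -/
def swapBits (i j α : ℕ) : ℕ :=
  if α.testBit i = α.testBit j then α else α ^^^ (2 ^ i ^^^ 2 ^ j)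

/-!
Swapping two unequal bits is flipping both of them, and flipping bit `k` of `n` changes `n` by
`+2^k` if that bit was `0` and by `-2^k` if it was `1` (read off from the carry identity
`m + n = (m ^^^ n) + 2 * (m &&& n)` with `m = 2^k`). Flipping bits `i` and `j` with
`δ = bit i α - bit j α = ±1` therefore changes `α` by exactly `-δ * (2^i - 2^j)`; when the bits
agree, `δ = 0` and nothing changes. Multiplying by `β` gives the claim.
-/

theorem Nat.xor_add_two_mul_and (m n : ℕ) : (m ^^^ n) + 2 * (m &&& n) = m + n := by
  induction m using Nat.binaryRec generalizing n with
  | zero => simp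
  | bit a m ih =>
    obtain ⟨b, n, rfl⟩ : ∃ b k, Nat.bit b k = n := ⟨_, _, Nat.bit_testBit_zero_shiftRight_one n⟩
    rw [Nat.xor_bit, Nat.land_bit]
    have carry := ih n
    cases a <;> cases b <;> simp [Nat.bit_val] <;> omega

lemma cast_xor_two_pow (n i : ℕ) : ((n ^^^ 2 ^ i : ℕ) : ℤ) = n + (1 - 2 * bit i n) * 2 ^ i := by
  have h : ((n ^^^ 2 ^ i : ℕ) : ℤ) + 2 * ((n.testBit i).toNat * 2 ^ i) = n + 2 ^ i := by
    exact_mod_cast Nat.and_two_pow n i ▸ Nat.xor_add_two_mul_and n (2 ^ i)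
  have hb : bit i n = (n.testBit i).toNat := by unfold bit; cases n.testBit i <;> rfl
  rw [hb]
  linear_combination h

lemma bit_xor_two_pow_of_ne {i j : ℕ} (h : j ≠ i) (n : ℕ) : bit j (n ^^^ 2 ^ i) = bit j n := by
  simp [bit, Nat.testBit_xor, Nat.testBit_two_pow_of_ne h.symm]

lemma cast_swapBits (i j α : ℕ) :
    (swapBits i j α : ℤ) = α - (bit i α - bit j α) * (2 ^ i - 2 ^ j) := by
  unfold swapBits
  split_ifs with h
  · simp [bit, h]
  · have hji : j ≠ i := by rintro rfl; exact h rfl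
    have hbit : bit j α = 1 - bit i α := by
      unfold bit; cases hi : α.testBit i <;> simp_all
    rw [← Nat.xor_assoc, cast_xor_two_pow, cast_xor_two_pow, bit_xor_two_pow_of_ne hji, hbit]
    ring

theorem reswo_correct_general (α β i j : ℕ) :
    (swapBits i j α : ℤ) * β + (bit i α - bit j α) * (2 ^ i - 2 ^ j) * β = (α : ℤ) * β := by
  rw [cast_swapBits]
  ring

theorem reswo_correct (α β i j : ℕ) (hij : i ≠ j) :
    (swapBits i j α : ℤ) * β + (bit i α - bit j α) * (2 ^ i - 2 ^ j) * β = (α : ℤ) * β :=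
  reswo_correct_general α β i j
end

section
/- Let q ≥ 2, k natural numbers with q < 2^k, μ = ⌊2^(2k)/q⌋, and c a natural number with c < 2^(2k). Then the Barrett quotient estimate satisfies ⌊c/q⌋ - 2 ≤ ⌊c·μ/2^(2k)⌋ ≤ ⌊c/q⌋. -/
/-!
Write `μ = ⌊N/q⌋` and `t = ⌊c/q⌋`. Since `μ ≤ N/q`, the estimate `⌊cμ/N⌋` never exceeds
`⌊c/q⌋`. Conversely `N ≤ q(μ + 1)` and `qt ≤ c`, so `tN ≤ tqμ + tq ≤ cμ + c`, and when
`c ≤ N` this gives `t ≤ ⌊cμ/N⌋ + 1`.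
-/

namespace Nat

theorem mul_div_div_le_div (c N q : ℕ) : c * (N / q) / N ≤ c / q := by
  rcases N.eq_zero_or_pos with rfl | hN
  · simp
  calc c * (N / q) / N ≤ c * N / q / N := Nat.div_le_div_right (c.mul_div_le_mul_div_assoc N q)
    _ = c * N / (q * N) := Nat.div_div_eq_div_mul _ _ _
    _ = c / q := Nat.mul_div_mul_right c q hN

theorem div_le_mul_div_div_add_one {c N : ℕ} (q : ℕ) (hcN : c ≤ N) :
    c / q ≤ c * (N / q) / N + 1 := by
  rcases q.eq_zero_or_pos with rfl | hq
  · simp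
  rcases N.eq_zero_or_pos with rfl | hN
  · simp_all
  have hN_le : N ≤ q * (N / q) + q := (Nat.lt_mul_div_succ N hq).le.trans_eq (Nat.mul_succ q _)
  have hqt : q * (c / q) ≤ c := Nat.mul_div_le c q
  rw [← Nat.add_div_right _ hN, Nat.le_div_iff_mul_le hN]
  calc c / q * N ≤ c / q * (q * (N / q) + q) := Nat.mul_le_mul_left _ hN_le
    _ = q * (c / q) * (N / q) + q * (c / q) := by ring
    _ ≤ c * (N / q) + N := by gcongr; omega

end Nat

theorem barrett_quotient_bounds_general (q k c : ℕ)
    (hc : c < 2 ^ (2 * k)) :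
    ((c / q : ℕ) : ℤ) - 2 ≤ ((c * (2 ^ (2 * k) / q)) / 2 ^ (2 * k) : ℕ) ∧
      (c * (2 ^ (2 * k) / q)) / 2 ^ (2 * k) ≤ c / q := by
  have hlower := Nat.div_le_mul_div_div_add_one q hc.le
  exact ⟨by omega, Nat.mul_div_div_le_div c _ q⟩

theorem barrett_quotient_bounds (q k c : ℕ) (hq : 2 ≤ q) (hqk : q < 2 ^ k)
    (hc : c < 2 ^ (2 * k)) :
    ((c / q : ℕ) : ℤ) - 2 ≤ ((c * (2 ^ (2 * k) / q)) / 2 ^ (2 * k) : ℕ) ∧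
      (c * (2 ^ (2 * k) / q)) / 2 ^ (2 * k) ≤ c / q :=
  barrett_quotient_bounds_general q k c hc
end

section
/- Let q ≥ 2, k natural with q < 2^k, μ = ⌊2^(2k)/q⌋, and c < 2^(2k). Then the Barrett remainder r = c - ⌊c·μ/2^(2k)⌋·q satisfies 0 ≤ r < 3q. -/
/-!
Write `μ = ⌊N/q⌋` and `m = ⌊c μ / N⌋` with `N = 2^(2k)`. Both floors lose less than one unit:
`m N ≤ c μ < (m + 1) N` and `μ q ≤ N < (μ + 1) q`. Multiplying out, `m q N ≤ c μ q ≤ c N`, and,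
using `c < N`, `c N < q (c μ) + q c < q (m + 1) N + q N`. Dividing by `N` gives
`m q ≤ c < (m + 2) q`, so the remainder even lies in `[0, 2q)`.
-/

def barrettQuotient (N q c : ℕ) : ℕ := c * (N / q) / N

theorem barrettQuotient_mul_le (N q c : ℕ) : barrettQuotient N q c * q ≤ c := by
  obtain rfl | hN := N.eq_zero_or_pos
  · simp [barrettQuotient]
  refine Nat.le_of_mul_le_mul_right ?_ hN
  calc barrettQuotient N q c * q * N = c * (N / q) / N * N * q := by
        rw [barrettQuotient, mul_right_comm]
    _ ≤ c * (N / q) * q := Nat.mul_le_mul_right q (Nat.div_mul_le_self _ _)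
    _ = c * (N / q * q) := mul_assoc _ _ _
    _ ≤ c * N := Nat.mul_le_mul_left c (Nat.div_mul_le_self _ _)

theorem lt_barrettQuotient_add_two_mul {N q c : ℕ} (hq : 0 < q) (hc : c < N) :
    c < (barrettQuotient N q c + 2) * q := by
  have hN : 0 < N := by omega
  set μ := N / q
  set m := barrettQuotient N q c
  have hμ : N < q * (μ + 1) := Nat.lt_mul_div_succ N hq
  have hm : c * μ < N * (m + 1) := Nat.lt_mul_div_succ (c * μ) hN
  refine Nat.lt_of_mul_lt_mul_right (a := N) ?_
  calc c * N ≤ c * (q * (μ + 1)) := by gcongr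
    _ = q * (c * μ) + q * c := by ring
    _ < q * (N * (m + 1)) + q * N := by gcongr
    _ = (m + 2) * q * N := by ring

theorem barrett_remainder_bounds_general (q k c : ℕ) (hq : 2 ≤ q)
    (hc : c < 2 ^ (2 * k)) :
    0 ≤ (c : ℤ) - ((c * (2 ^ (2 * k) / q)) / 2 ^ (2 * k) : ℕ) * q ∧
      (c : ℤ) - ((c * (2 ^ (2 * k) / q)) / 2 ^ (2 * k) : ℕ) * q < 3 * q := by
  have hlower := barrettQuotient_mul_le (2 ^ (2 * k)) q c
  have hupper := lt_barrettQuotient_add_two_mul (q := q) (by omega) hc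
  rw [barrettQuotient] at hlower hupper
  generalize c * (2 ^ (2 * k) / q) / 2 ^ (2 * k) = m at *
  zify at hlower hupper
  constructor <;> linarith

theorem barrett_remainder_bounds (q k c : ℕ) (hq : 2 ≤ q) (hqk : q < 2 ^ k)
    (hc : c < 2 ^ (2 * k)) :
    0 ≤ (c : ℤ) - ((c * (2 ^ (2 * k) / q)) / 2 ^ (2 * k) : ℕ) * q ∧
      (c : ℤ) - ((c * (2 ^ (2 * k) / q)) / 2 ^ (2 * k) : ℕ) * q < 3 * q :=
  barrett_remainder_bounds_general q k c hq hc
end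

section
/- Let q ≥ 2 and suppose Σ over all word pairs of the per-word Barrett residues, each reduced into [0, q) and accumulated with conditional subtraction (if the running sum ρ exceeds q, subtract q; the accumulation adds (l/w)² terms each < q), yields a value ρ congruent to α · β modulo q. -/
/-- One accumulation step of MBRFD: add a residue and conditionally subtract `q`. -/
def mbrfdStep (q ρ r : ℕ) : ℕ := if q ≤ ρ + r then ρ + r - q else ρ + r

/-!
Each conditional subtraction leaves the accumulator's residue mod `q` unchanged, and so does
reducing each partial product, so `ρ ≡ ∑ᵢ ∑ⱼ αᵢ βⱼ 2^{(i+j)w}`. The `αᵢ` are the base-`2^w`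
digits of `α`, so this double sum is `(α mod 2^l)(β mod 2^l) = α β`.
-/

open Finset

theorem mbrfdStep_modEq (q ρ r : ℕ) : mbrfdStep q ρ r ≡ ρ + r [MOD q] := by
  unfold mbrfdStep
  split_ifs with h
  · exact (Nat.mod_eq_sub_mod h).symm
  · rfl

theorem foldl_mbrfdStep_modEq (q : ℕ) (L : List ℕ) (ρ : ℕ) :
    L.foldl (mbrfdStep q) ρ ≡ ρ + L.sum [MOD q] := by
  induction L generalizing ρ with
  | nil => simp [Nat.ModEq.refl]
  | cons r L ih =>
    rw [List.foldl_cons, List.sum_cons, ← add_assoc]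
    exact (ih _).trans ((mbrfdStep_modEq q ρ r).add_right _)

theorem List.sum_flatMap_range_map {M : Type*} [AddCommMonoid M] (n : ℕ) (f : ℕ → ℕ → M) :
    ((List.range n).flatMap fun i => (List.range n).map (f i)).sum =
      ∑ i ∈ Finset.range n, ∑ j ∈ Finset.range n, f i j := by
  simp only [List.flatMap, List.sum_flatten, List.map_map]
  rfl

theorem Nat.sum_range_div_pow_mod_mul_pow (b x n : ℕ) :
    ∑ i ∈ range n, x / b ^ i % b * b ^ i = x % b ^ n := by
  induction n with
  | zero => simp [Nat.mod_one]
  | succ n ih => rw [sum_range_succ, ih, pow_succ, Nat.mod_mul]; ring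

theorem sum_sum_word_mul_word (w n x y : ℕ) :
    ∑ i ∈ range n, ∑ j ∈ range n,
        x / 2 ^ (i * w) % 2 ^ w * (y / 2 ^ (j * w) % 2 ^ w) * 2 ^ ((i + j) * w) =
      x % 2 ^ (n * w) * (y % 2 ^ (n * w)) := by
  have words (z : ℕ) : ∑ i ∈ range n, z / 2 ^ (i * w) % 2 ^ w * 2 ^ (i * w) = z % 2 ^ (n * w) := by
    simpa only [← pow_mul, mul_comm w] using Nat.sum_range_div_pow_mod_mul_pow (2 ^ w) z n
  rw [← words x, ← words y, sum_mul_sum]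
  exact sum_congr rfl fun i _ => sum_congr rfl fun j _ => by ring

theorem mbrfd_accumulator_correct_general (l w α β q : ℕ) (hwl : w ∣ l)
    (hα : α < 2 ^ l) (hβ : β < 2 ^ l) :
    (((List.range (l / w)).flatMap (fun i =>
        (List.range (l / w)).map (fun j =>
          ((α / 2 ^ (i * w) % 2 ^ w) * (β / 2 ^ (j * w) % 2 ^ w) * 2 ^ ((i + j) * w)) % q))).foldl
      (mbrfdStep q) 0) % q = (α * β) % q := by
  refine (foldl_mbrfdStep_modEq q _ 0).trans ?_
  rw [zero_add, List.sum_flatMap_range_map]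
  calc _ ≡ ∑ i ∈ range (l / w), ∑ j ∈ range (l / w),
          α / 2 ^ (i * w) % 2 ^ w * (β / 2 ^ (j * w) % 2 ^ w) * 2 ^ ((i + j) * w) [MOD q] :=
        Nat.ModEq.sum fun i _ => Nat.ModEq.sum fun j _ => Nat.mod_modEq _ _
    _ = α * β := by
        rw [sum_sum_word_mul_word, Nat.div_mul_cancel hwl, Nat.mod_eq_of_lt hα,
          Nat.mod_eq_of_lt hβ]

theorem mbrfd_accumulator_correct (l w α β q : ℕ) (hq : 2 ≤ q) (hwl : w ∣ l)
    (hα : α < 2 ^ l) (hβ : β < 2 ^ l) :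
    (((List.range (l / w)).flatMap (fun i =>
        (List.range (l / w)).map (fun j =>
          ((α / 2 ^ (i * w) % 2 ^ w) * (β / 2 ^ (j * w) % 2 ^ w) * 2 ^ ((i + j) * w)) % q))).foldl
      (mbrfdStep q) 0) % q = (α * β) % q :=
  mbrfd_accumulator_correct_general l w α β q hwl hα hβ
end
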